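/- arXiv:1405.2064 — 6 statements merged into one kernel-verified Lean document; each statement's English description precedes it below -/
import Mathlib

section
/- A permutation p of [n] avoids both dashed patterns 32-41 and 41-32 if and only if it avoids nested descents, i.e., there are no two distinct descents (positions i<j with p(i)>p(i+1), p(j)>p(j+1)) such that one of the intervals [p(i+1),p(i)], [p(j+1),p(j)] is contained in the other. -/
/-- `p` restricted to `{1,…,n}` is a permutation of `[n] = {1,…,n}`. -/
def PermOn (n : ℕ) (p : ℕ → ℕ) : Prop :=
  Set.BijOn p (Set.Icc 1 n) (Set.Icc 1 n)

/-- `p` has a descent at position `i` (1-based): `p(i) > p(i+1)`. -/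
def DescentAt (n : ℕ) (p : ℕ → ℕ) (i : ℕ) : Prop :=
  1 ≤ i ∧ i + 1 ≤ n ∧ p (i + 1) < p i

/-- `p` contains the dashed pattern 32-41. -/
def Contains3241 (n : ℕ) (p : ℕ → ℕ) : Prop :=
  ∃ i j, DescentAt n p i ∧ DescentAt n p j ∧ i + 1 < j ∧
    p (j + 1) < p (i + 1) ∧ p i < p j

/-- `p` contains the dashed pattern 41-32. -/
def Contains4132 (n : ℕ) (p : ℕ → ℕ) : Prop :=
  ∃ i j, DescentAt n p i ∧ DescentAt n p j ∧ i + 1 < j ∧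
    p (i + 1) < p (j + 1) ∧ p j < p i

/-- `p` avoids both 32-41 and 41-32. -/
def AvoidsBoth (n : ℕ) (p : ℕ → ℕ) : Prop :=
  ¬ Contains3241 n p ∧ ¬ Contains4132 n p

/-- `p` has two distinct nested descents. -/
def NestedDescents (n : ℕ) (p : ℕ → ℕ) : Prop :=
  ∃ i j, DescentAt n p i ∧ DescentAt n p j ∧ i ≠ j ∧
    ((p (j + 1) ≤ p (i + 1) ∧ p i ≤ p j) ∨ (p (i + 1) ≤ p (j + 1) ∧ p j ≤ p i))

/-- View a permutation of `Fin n` as a function on `{1,…,n}` with values in `{1,…,n}`. -/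
def permToFun (n : ℕ) (p : Equiv.Perm (Fin n)) : ℕ → ℕ :=
  fun i => if h : 1 ≤ i ∧ i ≤ n then ((p ⟨i - 1, by omega⟩ : Fin n) : ℕ) + 1 else 0

/-- A set partition of `[m] = {1,…,m}` is indecomposable if it does not split at any
`k` with `1 ≤ k < m` into a partition of `{1,…,k}` and a partition of `{k+1,…,m}`. -/
def Indecomposable (m : ℕ) (π : Finpartition (Finset.Icc 1 m)) : Prop :=
  ¬ ∃ k, 1 ≤ k ∧ k < m ∧ ∀ B ∈ π.parts, B ⊆ Finset.Icc 1 k ∨ B ⊆ Finset.Icc (k + 1) m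


/-! Two distinct descents of a permutation never share a top or a bottom value, so nesting
is automatically strict; and adjacent descents `i, i + 1` form the chain `p i > p (i+1) > p (i+2)`,
which is never nested. Hence nested descents `i < j` are exactly an occurrence of 32-41 or 41-32. -/

section

variable {n : ℕ} {p : ℕ → ℕ} {i j : ℕ}

theorem PermOn.descent_apply_ne (hp : PermOn n p) (hi : DescentAt n p i) (hj : DescentAt n p j)
    (hij : i ≠ j) : p i ≠ p j ∧ p (i + 1) ≠ p (j + 1) := by
  obtain ⟨hi₁, hin, -⟩ := hi
  obtain ⟨hj₁, hjn, -⟩ := hj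
  refine ⟨fun h => hij (hp.injOn ⟨hi₁, by omega⟩ ⟨hj₁, by omega⟩ h), fun h => ?_⟩
  have := hp.injOn (⟨by omega, hin⟩ : i + 1 ∈ Set.Icc 1 n) ⟨by omega, hjn⟩ h
  omega

theorem DescentAt.succ_lt_of_nested (hi : DescentAt n p i) (hj : DescentAt n p j) (hij : i < j)
    (hnest : (p (j + 1) ≤ p (i + 1) ∧ p i ≤ p j) ∨ (p (i + 1) ≤ p (j + 1) ∧ p j ≤ p i)) :
    i + 1 < j := by
  obtain rfl | hgap := (show i + 1 ≤ j from hij).eq_or_lt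
  · have := hi.2.2
    have := hj.2.2
    omega
  · exact hgap

theorem PermOn.nestedDescents_iff (hp : PermOn n p) :
    NestedDescents n p ↔ Contains3241 n p ∨ Contains4132 n p := by
  constructor
  · rintro ⟨i, j, hi, hj, hij, hnest⟩
    have ⟨hne, hne'⟩ := hp.descent_apply_ne hi hj hij
    rcases hij.lt_or_gt with hlt | hlt
    · have hgap := hi.succ_lt_of_nested hj hlt hnest
      rcases hnest with ⟨h₁, h₂⟩ | ⟨h₁, h₂⟩
      · exact .inl ⟨i, j, hi, hj, hgap, by omega, by omega⟩
      · exact .inr ⟨i, j, hi, hj, hgap, by omega, by omega⟩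
    · have hgap := hj.succ_lt_of_nested hi hlt hnest.symm
      rcases hnest with ⟨h₁, h₂⟩ | ⟨h₁, h₂⟩
      · exact .inr ⟨j, i, hj, hi, hgap, by omega, by omega⟩
      · exact .inl ⟨j, i, hj, hi, hgap, by omega, by omega⟩
  · rintro (⟨i, j, hi, hj, hij, h₁, h₂⟩ | ⟨i, j, hi, hj, hij, h₁, h₂⟩)
    · exact ⟨i, j, hi, hj, by omega, .inl ⟨h₁.le, h₂.le⟩⟩
    · exact ⟨i, j, hi, hj, by omega, .inr ⟨h₁.le, h₂.le⟩⟩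

end

theorem avoids_iff_no_nested_descents (n : ℕ) (p : ℕ → ℕ) (hp : PermOn n p) :
    AvoidsBoth n p ↔ ¬ NestedDescents n p := by
  rw [AvoidsBoth, hp.nestedDescents_iff, not_or]
end

section
/- A permutation p of [n] avoids both dashed patterns 32-41 and 41-32 if and only if the sequence of its descent initiators (read left to right) is order isomorphic to the sequence of its descent terminators (read left to right). -/
/-!
Two descents at positions `i + 1 < j` of a permutation compare their initiators and their
terminators differently exactly when they form a 32-41 or a 41-32, because injectivity rules
out ties. Descents at adjacent positions `i`, `i + 1` always compare both ways alike, since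
`p i > p (i + 1) > p (i + 2)`.
-/

theorem DescentAt.mem_Icc {n : ℕ} {p : ℕ → ℕ} {i : ℕ} (h : DescentAt n p i) :
    i ∈ Set.Icc 1 n :=
  ⟨h.1, by have := h.2.1; omega⟩

theorem DescentAt.succ_mem_Icc {n : ℕ} {p : ℕ → ℕ} {i : ℕ} (h : DescentAt n p i) :
    i + 1 ∈ Set.Icc 1 n :=
  ⟨by omega, h.2.1⟩

theorem DescentAt.lt_iff_lt_of_succ {n : ℕ} {p : ℕ → ℕ} {i : ℕ} (hi : DescentAt n p i)
    (hi' : DescentAt n p (i + 1)) : p i < p (i + 1) ↔ p (i + 1) < p (i + 1 + 1) := by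
  have := hi.2.2
  have := hi'.2.2
  omega

theorem DescentAt.lt_iff_lt_iff_of_injOn {n : ℕ} {p : ℕ → ℕ} {i j : ℕ}
    (hinj : Set.InjOn p (Set.Icc 1 n)) (hi : DescentAt n p i) (hj : DescentAt n p j)
    (hij : i + 1 < j) :
    (p i < p j ↔ p (i + 1) < p (j + 1)) ↔
      ¬(p (j + 1) < p (i + 1) ∧ p i < p j) ∧ ¬(p (i + 1) < p (j + 1) ∧ p j < p i) := by
  have hinit : p i ≠ p j := fun h => by
    have := hinj hi.mem_Icc hj.mem_Icc h
    omega
  have hterm : p (i + 1) ≠ p (j + 1) := fun h => by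
    have := hinj hi.succ_mem_Icc hj.succ_mem_Icc h
    omega
  omega

theorem avoidsBoth_iff {n : ℕ} {p : ℕ → ℕ} :
    AvoidsBoth n p ↔ ∀ i j, DescentAt n p i → DescentAt n p j → i + 1 < j →
      ¬(p (j + 1) < p (i + 1) ∧ p i < p j) ∧ ¬(p (i + 1) < p (j + 1) ∧ p j < p i) := by
  simp only [AvoidsBoth, Contains3241, Contains4132, not_exists, not_and, ← forall_and]

/-- A permutation avoids 32-41 and 41-32 iff its descent initiators are order
isomorphic to its descent terminators (both read left to right). -/
theorem avoids_iff_initiators_orderIso_terminators (n : ℕ) (p : ℕ → ℕ) (hp : PermOn n p) :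
    AvoidsBoth n p ↔
      ∀ i j, DescentAt n p i → DescentAt n p j → i < j →
        (p i < p j ↔ p (i + 1) < p (j + 1)) := by
  have hinj : Set.InjOn p (Set.Icc 1 n) := hp.injOn
  rw [avoidsBoth_iff]
  constructor
  · intro havoid i j hi hj hij
    rcases (show i + 1 = j ∨ i + 1 < j by omega) with rfl | hij
    · exact hi.lt_iff_lt_of_succ hj
    · exact (hi.lt_iff_lt_iff_of_injOn hinj hj hij).2 (havoid i j hi hj hij)
  · intro hiso i j hi hj hij
    exact (hi.lt_iff_lt_iff_of_injOn hinj hj hij).1 (hiso i j hi hj (by omega))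
end

section
/- In an indecomposable set partition of [n+1] with n ≥ 1, every singleton block {a} is straddled by some big block B, i.e., there is a block B with at least two elements such that min B < a < max B. -/
theorem Indecomposable.exists_mem_le_lt_mem {m : ℕ} {π : Finpartition (Finset.Icc 1 m)}
    (hπ : Indecomposable m π) {k : ℕ} (hk : 1 ≤ k) (hkm : k < m) :
    ∃ C ∈ π.parts, ∃ x ∈ C, ∃ y ∈ C, x ≤ k ∧ k < y := by
  by_contra! hsplit
  refine hπ ⟨k, hk, hkm, fun C hC => ?_⟩
  by_cases hlow : ∃ x ∈ C, x ≤ k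
  · obtain ⟨x, hx, hxk⟩ := hlow
    refine Or.inl fun y hy => ?_
    have := Finset.mem_Icc.1 (π.le hC hy)
    have := hsplit C hC x hx y hy hxk
    exact Finset.mem_Icc.2 (by omega)
  · push Not at hlow
    refine Or.inr fun y hy => ?_
    have := Finset.mem_Icc.1 (π.le hC hy)
    have := hlow y hy
    exact Finset.mem_Icc.2 (by omega)

/-- In an indecomposable partition of `[n+1]`, `n ≥ 1`, every singleton block is
straddled by a big block. -/
theorem singleton_straddled (n : ℕ) (hn : 1 ≤ n)
    (π : Finpartition (Finset.Icc 1 (n + 1))) (hπ : Indecomposable (n + 1) π)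
    (B : Finset ℕ) (hB : B ∈ π.parts) (hcard : B.card = 1) (a : ℕ) (ha : a ∈ B) :
    ∃ C ∈ π.parts, 2 ≤ C.card ∧ (∃ x ∈ C, x < a) ∧ (∃ y ∈ C, a < y) := by
  have haI := Finset.mem_Icc.1 (π.le hB ha)
  -- A cut `k` next to `a` is crossed by some block; that block misses `a`, so it straddles `a`.
  obtain ⟨k, hk, hkn, hka, hak⟩ : ∃ k, 1 ≤ k ∧ k < n + 1 ∧ k ≤ a ∧ a ≤ k + 1 :=
    ⟨max 1 (a - 1), by omega, by omega, by omega, by omega⟩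
  obtain ⟨C, hC, x, hx, y, hy, hxk, hky⟩ := hπ.exists_mem_le_lt_mem hk hkn
  have haC : a ∉ C := fun haC => by
    have hCB := π.eq_of_mem_parts hC hB haC ha
    have := Finset.card_le_one.1 hcard.le x (hCB ▸ hx) y (hCB ▸ hy)
    omega
  have hxa : x ≠ a := fun h => haC (h ▸ hx)
  have hya : y ≠ a := fun h => haC (h ▸ hy)
  exact ⟨C, hC, Finset.one_lt_card.2 ⟨x, hx, y, hy, by omega⟩, ⟨x, hx, by omega⟩, ⟨y, hy, by omega⟩⟩
end

section
/- If two distinct descents of a permutation are nested, then the permutation contains at least one of the dashed patterns 32-41 or 41-32. -/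
/-!
Injectivity of `p` makes a nesting of distinct descents strict, and a descent cannot be nested
inside an adjacent one, so a nested pair is exactly an occurrence of 32-41 (inner descent first)
or 41-32 (outer descent first).
-/

/-- The descent interval `[p (i + 1), p i]` is contained in `[p (j + 1), p j]`. -/
def NestedIn (p : ℕ → ℕ) (i j : ℕ) : Prop :=
  p (j + 1) ≤ p (i + 1) ∧ p i ≤ p j

theorem nestedDescents_iff {n : ℕ} {p : ℕ → ℕ} :
    NestedDescents n p ↔
      ∃ i j, DescentAt n p i ∧ DescentAt n p j ∧ i ≠ j ∧ NestedIn p i j := by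
  constructor
  · rintro ⟨i, j, hi, hj, hne, hij | hji⟩
    exacts [⟨i, j, hi, hj, hne, hij⟩, ⟨j, i, hj, hi, hne.symm, hji⟩]
  · rintro ⟨i, j, hi, hj, hne, hij⟩
    exact ⟨i, j, hi, hj, hne, Or.inl hij⟩

namespace DescentAt

variable {n : ℕ} {p : ℕ → ℕ} {i : ℕ}

theorem mem_Icc_s9 (h : DescentAt n p i) : i ∈ Set.Icc 1 n :=
  ⟨h.1, Nat.le_of_succ_le h.2.1⟩

theorem succ_mem_Icc_s9 (h : DescentAt n p i) : i + 1 ∈ Set.Icc 1 n :=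
  ⟨by omega, h.2.1⟩

end DescentAt

namespace NestedIn

variable {n : ℕ} {p : ℕ → ℕ} {i j : ℕ}

theorem lt_and_lt (hp : Set.InjOn p (Set.Icc 1 n)) (hi : DescentAt n p i)
    (hj : DescentAt n p j) (hne : i ≠ j) (h : NestedIn p i j) :
    p (j + 1) < p (i + 1) ∧ p i < p j := by
  have hsucc : p (j + 1) ≠ p (i + 1) := fun he =>
    hne (Nat.succ_injective (hp hi.succ_mem_Icc_s9 hj.succ_mem_Icc_s9 he.symm))
  have hself : p i ≠ p j := fun he => hne (hp hi.mem_Icc_s9 hj.mem_Icc_s9 he)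
  exact ⟨h.1.lt_of_ne hsucc, h.2.lt_of_ne hself⟩

theorem succ_lt_or_succ_lt (hi : p (i + 1) < p i) (hne : i ≠ j) (h : NestedIn p i j) :
    i + 1 < j ∨ j + 1 < i := by
  obtain ⟨hlo, hhi⟩ := h
  rcases Nat.lt_or_gt_of_ne hne with hlt | hlt
  · refine Or.inl (lt_of_le_of_ne hlt fun hj => ?_)
    subst hj
    omega
  · refine Or.inr (lt_of_le_of_ne hlt fun hi' => ?_)
    subst hi'
    omega

end NestedIn

theorem nested_implies_contains (n : ℕ) (p : ℕ → ℕ) (hp : PermOn n p)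
    (h : NestedDescents n p) : Contains3241 n p ∨ Contains4132 n p := by
  obtain ⟨i, j, hi, hj, hne, hij⟩ := nestedDescents_iff.mp h
  obtain ⟨hlo, hhi⟩ := hij.lt_and_lt hp.injOn hi hj hne
  rcases hij.succ_lt_or_succ_lt hi.2.2 hne with hsep | hsep
  · exact Or.inl ⟨i, j, hi, hj, hsep, hlo, hhi⟩
  · exact Or.inr ⟨j, i, hj, hi, hsep, hlo, hhi⟩
end

section
/- Let π be an indecomposable set partition of [n+1] with more than one block, whose penultimate block (the block with second-largest maximum) is big, and suppose π has a singleton block {a} that is not straddled by any non-penultimate big block, with a chosen largest among such. Then the penultimate block straddles a, and transferring all entries of the penultimate block that are less than a into the block {a} yields a decomposable set partition of [n+1]. -/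
/-!
If `P` did not straddle `a`, then no block of `π` would contain both an entry `≤ a` and an
entry `> a` (the other big blocks do not straddle `a` by assumption, singletons never do), so
`π` would split after `a`; the case `a = n + 1` is excluded the same way, splitting after `n`.
After the tweak, the entries of `P` below `a` sit in the block of `a` and the rest of `P` lies
above `a`, so the new partition splits after `a`.
-/

open Finset

def Straddles (B : Finset ℕ) (a : ℕ) : Prop :=
  (∃ x ∈ B, x < a) ∧ ∃ y ∈ B, a < y

lemma Straddles.two_le_card {B : Finset ℕ} {a : ℕ} (h : Straddles B a) : 2 ≤ #B := by
  obtain ⟨⟨x, hx, hxa⟩, y, hy, hay⟩ := h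
  exact one_lt_card.mpr ⟨x, hx, y, hy, by omega⟩

lemma le_of_not_straddles {B : Finset ℕ} {a x y : ℕ} (haB : a ∉ B) (hB : ¬ Straddles B a)
    (hx : x ∈ B) (hy : y ∈ B) (hxa : x ≤ a) : y ≤ a := by
  have hxa : x < a := lt_of_le_of_ne hxa (by rintro rfl; exact haB hx)
  by_contra! hay
  exact hB ⟨⟨x, hx, hxa⟩, y, hy, hay⟩

lemma not_indecomposable_of_cut {m k : ℕ} (π : Finpartition (Icc 1 m)) (hk : 1 ≤ k)
    (hkm : k < m) (hcut : ∀ B ∈ π.parts, ∀ x ∈ B, ∀ y ∈ B, x ≤ k → y ≤ k) :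
    ¬ Indecomposable m π := by
  refine not_not.mpr ⟨k, hk, hkm, fun B hB => ?_⟩
  have hBsub := π.le hB
  by_cases hlow : ∃ x ∈ B, x ≤ k
  · obtain ⟨x, hx, hxk⟩ := hlow
    left
    intro y hy
    exact mem_Icc.mpr ⟨(mem_Icc.mp (hBsub hy)).1, hcut B hB x hx y hy hxk⟩
  · push Not at hlow
    right
    intro y hy
    exact mem_Icc.mpr ⟨hlow y hy, (mem_Icc.mp (hBsub hy)).2⟩

lemma not_indecomposable_of_singleton_top {m : ℕ} (π : Finpartition (Icc 1 m)) (hm : 2 ≤ m)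
    (htop : {m} ∈ π.parts) : ¬ Indecomposable m π := by
  refine not_indecomposable_of_cut π (k := m - 1) (by omega) (by omega)
    fun B hB x hx y hy hxk => ?_
  by_contra! hyk
  have hym : y = m := by have := mem_Icc.mp (π.le hB hy); omega
  subst hym
  have hBtop : B = {y} := π.eq_of_mem_parts hB htop hy (mem_singleton_self y)
  rw [hBtop, mem_singleton] at hx
  omega

theorem tweak_inverse_general (n : ℕ) (π : Finpartition (Finset.Icc 1 (n + 1)))
    (hind : Indecomposable (n + 1) π) (h2 : 2 ≤ π.parts.card)
    (P : Finset ℕ)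
    (a : ℕ) (ha : {a} ∈ π.parts)
    (hnostrad : ¬ ∃ B ∈ π.parts, B ≠ P ∧ 2 ≤ B.card ∧ (∃ x ∈ B, x < a) ∧ ∃ y ∈ B, a < y) :
    ((∃ x ∈ P, x < a) ∧ ∃ y ∈ P, a < y) ∧
    ∀ π' : Finpartition (Finset.Icc 1 (n + 1)),
      π'.parts = (π.parts \ {P, {a}}) ∪
        {P.filter (fun x => a < x), insert a (P.filter (fun x => x < a))} →
      ¬ Indecomposable (n + 1) π' := by
  have hn : 2 ≤ n + 1 := by simpa using h2.trans π.card_parts_le_card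
  have haπ := mem_Icc.mp (π.le ha (mem_singleton_self a))
  have ha_lt : a < n + 1 := by
    refine lt_of_le_of_ne haπ.2 fun hatop => ?_
    exact not_indecomposable_of_singleton_top π hn (hatop ▸ ha) hind
  have ha_notMem : ∀ B ∈ π.parts, B ≠ {a} → a ∉ B := fun B hB hBa haB =>
    hBa (π.eq_of_mem_parts hB ha haB (mem_singleton_self a))
  have hcut_other : ∀ B ∈ π.parts, B ≠ P → B ≠ {a} →
      ∀ x ∈ B, ∀ y ∈ B, x ≤ a → y ≤ a := fun B hB hBP hBa x hx y hy =>
    le_of_not_straddles (ha_notMem B hB hBa)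
      (fun hstr => hnostrad ⟨B, hB, hBP, hstr.two_le_card, hstr⟩) hx hy
  refine ⟨?_, fun π' hπ' => ?_⟩
  · by_contra hPa
    refine not_indecomposable_of_cut π haπ.1 ha_lt (fun B hB => ?_) hind
    by_cases hBa : B = {a}
    · simp [hBa]
    by_cases hBP : B = P
    · exact fun x hx y hy => le_of_not_straddles (ha_notMem B hB hBa) (hBP ▸ hPa) hx hy
    · exact hcut_other B hB hBP hBa
  · refine not_indecomposable_of_cut π' haπ.1 ha_lt fun B hB => ?_
    rw [hπ'] at hB
    simp only [mem_union, mem_sdiff, mem_insert, mem_singleton, not_or] at hB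
    rcases hB with ⟨hB, hBP, hBa⟩ | rfl | rfl
    · exact hcut_other B hB hBP hBa
    · simp +contextual
    · intro x hx y hy _
      simp only [mem_insert, mem_filter] at hy
      omega

/-- Inverse tweaking: in an indecomposable partition with big penultimate block `P`,
if `{a}` is the largest singleton not straddled by a non-penultimate big block, then `P`
straddles `a`, and moving the entries of `P` below `a` into `{a}` gives a decomposable
partition. Here `L` is the last block (containing `n+1`) and `P` the penultimate block. -/
theorem tweak_inverse (n : ℕ) (π : Finpartition (Finset.Icc 1 (n + 1)))
    (hind : Indecomposable (n + 1) π) (h2 : 2 ≤ π.parts.card)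
    (L P : Finset ℕ) (hL : L ∈ π.parts) (hnL : n + 1 ∈ L)
    (hP : P ∈ π.parts) (hPL : P ≠ L)
    (hpen : ∀ B ∈ π.parts, B ≠ L → B ≠ P → ∃ q ∈ P, ∀ b ∈ B, b < q)
    (hPbig : 2 ≤ P.card)
    (a : ℕ) (ha : {a} ∈ π.parts)
    (hnostrad : ¬ ∃ B ∈ π.parts, B ≠ P ∧ 2 ≤ B.card ∧ (∃ x ∈ B, x < a) ∧ ∃ y ∈ B, a < y)
    (hmaxa : ∀ a', {a'} ∈ π.parts →
      (¬ ∃ B ∈ π.parts, B ≠ P ∧ 2 ≤ B.card ∧ (∃ x ∈ B, x < a') ∧ ∃ y ∈ B, a' < y) →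
      a' ≤ a) :
    ((∃ x ∈ P, x < a) ∧ ∃ y ∈ P, a < y) ∧
    ∀ π' : Finpartition (Finset.Icc 1 (n + 1)),
      π'.parts = (π.parts \ {P, {a}}) ∪
        {P.filter (fun x => a < x), insert a (P.filter (fun x => x < a))} →
      ¬ Indecomposable (n + 1) π' :=
  tweak_inverse_general n π hind h2 P a ha hnostrad
end

section
/- Let π be a decomposable set partition of [n+1] such that the last block of π does not consist of consecutive integers and every singleton block of π is straddled by a non-penultimate big block. Then the operation of transferring all entries except the largest from the last block of the first component of π into the penultimate block of π yields an indecomposable set partition of [n+1]. -/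
/-!
Write `M = P ∪ (F \ {k})` for the enlarged penultimate block. Since `F` has an element `x < k`
and `P` has an element `q > k`, the block `M` crosses every cut between `x` and `q`. A cut at
some `k' < k` would then also split `π` (the moved elements all lie above `k'`), against the
minimality of `k`. A cut at some `k' ≥ k` puts `M`, hence `P`, below `k'`; every block other
than `L` lies below an element of `P`, so `L` would be the whole interval `{k'+1, …, n+1}`.
The element `x` exists because a singleton `{k}` could not be straddled while `π` splits at `k`,
and `q` exists because `P ≠ F`: otherwise `L` would already be the interval `{k+1, …, n+1}`.
-/

open Finset

def SplitsAt (m t : ℕ) (π : Finpartition (Icc 1 m)) : Prop :=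
  ∀ B ∈ π.parts, B ⊆ Icc 1 t ∨ B ⊆ Icc (t + 1) m

namespace SplitsAt

variable {m t a : ℕ} {π : Finpartition (Icc 1 m)} {B : Finset ℕ}

lemma subset_Icc_of_le (h : SplitsAt m t π) (hB : B ∈ π.parts) (ha : a ∈ B) (hat : a ≤ t) :
    B ⊆ Icc 1 t :=
  (h B hB).resolve_right fun hB' => by have := (mem_Icc.1 (hB' ha)).1; omega

lemma subset_Icc_of_lt (h : SplitsAt m t π) (hB : B ∈ π.parts) (ha : a ∈ B) (hta : t < a) :
    B ⊆ Icc (t + 1) m :=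
  (h B hB).resolve_left fun hB' => by have := (mem_Icc.1 (hB' ha)).2; omega

lemma not_straddle (h : SplitsAt m t π) (hB : B ∈ π.parts) {b : ℕ} (ha : a ∈ B) (hb : b ∈ B)
    (hat : a ≤ t) (htb : t < b) : False := by
  have := (mem_Icc.1 (h.subset_Icc_of_le hB ha hat hb)).2
  omega

end SplitsAt

lemma Finpartition.eq_Icc_of_dominated {m t : ℕ} (π : Finpartition (Icc 1 m)) {L P : Finset ℕ}
    (hpen : ∀ B ∈ π.parts, B ≠ L → B ≠ P → ∃ q ∈ P, ∀ b ∈ B, b < q)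
    (hPt : P ⊆ Icc 1 t) (hLt : L ⊆ Icc (t + 1) m) : L = Icc (t + 1) m := by
  refine hLt.antisymm fun a ha => ?_
  have ha' := mem_Icc.1 ha
  obtain ⟨B, hB, haB⟩ := π.exists_mem (mem_Icc.2 ⟨by omega, ha'.2⟩)
  by_cases hBL : B = L
  · exact hBL ▸ haB
  by_cases hBP : B = P
  · have := (mem_Icc.1 (hPt (hBP ▸ haB))).2
    omega
  obtain ⟨q, hqP, hq⟩ := hpen B hB hBL hBP
  have := (mem_Icc.1 (hPt hqP)).2
  have := hq a haB
  omega

section Tweak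

variable {m k k' : ℕ} {π π' : Finpartition (Icc 1 m)} {F P : Finset ℕ}

lemma mem_tweak_of_mem (hπ' : π'.parts = (π.parts \ {F, P}) ∪ {{k}, P ∪ F.erase k})
    {B : Finset ℕ} (hB : B ∈ π.parts) (hBF : B ≠ F) (hBP : B ≠ P) : B ∈ π'.parts := by
  simp [hπ', hB, hBF, hBP]

lemma union_erase_mem_tweak (hπ' : π'.parts = (π.parts \ {F, P}) ∪ {{k}, P ∪ F.erase k}) :
    P ∪ F.erase k ∈ π'.parts := by
  simp [hπ']

lemma splitsAt_of_splitsAt_tweak (hπ' : π'.parts = (π.parts \ {F, P}) ∪ {{k}, P ∪ F.erase k})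
    {q : ℕ} (hqP : q ∈ P) (hk'q : k' < q) (hk'k : k' < k) (h' : SplitsAt m k' π') :
    SplitsAt m k' π := by
  have hM := h'.subset_Icc_of_lt (union_erase_mem_tweak hπ') (mem_union_left _ hqP) hk'q
  intro B hB
  by_cases hBF : B = F
  · refine .inr fun b hb => ?_
    by_cases hbk : b = k
    · have := mem_Icc.1 (π.le hB hb)
      exact mem_Icc.2 ⟨by omega, this.2⟩
    · exact hM (mem_union_right _ (mem_erase.2 ⟨hbk, hBF ▸ hb⟩))
  by_cases hBP : B = P
  · exact .inr (hBP ▸ subset_union_left.trans hM)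
  exact h' B (mem_tweak_of_mem hπ' hB hBF hBP)

lemma not_splitsAt_tweak_of_le (hπ' : π'.parts = (π.parts \ {F, P}) ∪ {{k}, P ∪ F.erase k})
    {L : Finset ℕ} (hL : L ∈ π.parts) (hLF : L ≠ F) (hLP : L ≠ P) (hmL : m ∈ L)
    (hpen : ∀ B ∈ π.parts, B ≠ L → B ≠ P → ∃ q ∈ P, ∀ b ∈ B, b < q)
    (hlast : ¬ ∃ a b, L = Icc a b) {x : ℕ} (hxF : x ∈ F) (hxk : x ≠ k) (hxk' : x ≤ k')
    (hk'm : k' < m) : ¬ SplitsAt m k' π' := fun h' => by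
  have hM := h'.subset_Icc_of_le (union_erase_mem_tweak hπ')
    (mem_union_right _ (mem_erase.2 ⟨hxk, hxF⟩)) hxk'
  have hLt := h'.subset_Icc_of_lt (mem_tweak_of_mem hπ' hL hLF hLP) hmL hk'm
  exact hlast ⟨_, _, π.eq_Icc_of_dominated hpen (subset_union_left.trans hM) hLt⟩

end Tweak

/-- Here `k` is the minimal split point, so the first component covers `{1,…,k}` and `F` is its
block containing `k`; `P` is the penultimate block. -/
theorem tweaking_yields_indecomposable_general (n : ℕ) (π : Finpartition (Finset.Icc 1 (n + 1)))
    (k : ℕ) (hkn : k ≤ n)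
    (hsplit : ∀ B ∈ π.parts, B ⊆ Finset.Icc 1 k ∨ B ⊆ Finset.Icc (k + 1) (n + 1))
    (hkmin : ∀ k', 1 ≤ k' →
      (∀ B ∈ π.parts, B ⊆ Finset.Icc 1 k' ∨ B ⊆ Finset.Icc (k' + 1) (n + 1)) → k ≤ k')
    (F : Finset ℕ) (hF : F ∈ π.parts) (hkF : k ∈ F)
    (L P : Finset ℕ) (hL : L ∈ π.parts) (hnL : n + 1 ∈ L)
    (hPL : P ≠ L)
    (hpen : ∀ B ∈ π.parts, B ≠ L → B ≠ P → ∃ q ∈ P, ∀ b ∈ B, b < q)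
    (hlastblock : ¬ ∃ m M, L = Finset.Icc m M)
    (hstrad : ∀ B ∈ π.parts, B.card = 1 → ∀ a ∈ B,
      ∃ C ∈ π.parts, C ≠ P ∧ 2 ≤ C.card ∧ (∃ x ∈ C, x < a) ∧ ∃ y ∈ C, a < y) :
    ∀ π' : Finpartition (Finset.Icc 1 (n + 1)),
      π'.parts = (π.parts \ {F, P}) ∪ {{k}, P ∪ F.erase k} →
      Indecomposable (n + 1) π' := by
  rintro π' hπ' ⟨k', hk'1, hk'n, h'⟩
  have hsplit : SplitsAt (n + 1) k π := hsplit
  have hFk : F ⊆ Icc 1 k := hsplit.subset_Icc_of_le hF hkF le_rfl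
  have hLk : L ⊆ Icc (k + 1) (n + 1) := hsplit.subset_Icc_of_lt hL hnL (by omega)
  have hFcard : 1 < F.card := by
    refine lt_of_le_of_ne (card_pos.2 ⟨k, hkF⟩) fun h => ?_
    obtain ⟨C, hC, -, -, ⟨y, hyC, hyk⟩, z, hzC, hkz⟩ := hstrad F hF h.symm k hkF
    exact hsplit.not_straddle hC hyC hzC hyk.le hkz
  obtain ⟨x, hxF, hxk⟩ := exists_mem_ne hFcard k
  have hxk' : x < k := lt_of_le_of_ne (mem_Icc.1 (hFk hxF)).2 hxk
  have hFL : F ≠ L := fun h => by have := (mem_Icc.1 (hFk (h ▸ hnL))).2; omega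
  have hFP : F ≠ P := by
    rintro rfl
    exact hlastblock ⟨_, _, π.eq_Icc_of_dominated hpen hFk hLk⟩
  obtain ⟨q, hqP, hq⟩ := hpen F hF hFL hFP
  rcases le_or_gt k k' with hkk' | hk'k
  · exact not_splitsAt_tweak_of_le hπ' hL hFL.symm hPL.symm hnL hpen hlastblock hxF hxk
      (by omega) hk'n h'
  · have := hkmin k' hk'1 (splitsAt_of_splitsAt_tweak hπ' hqP (by have := hq k hkF; omega) hk'k h')
    omega

/-- Tweaking map: for a decomposable partition whose last block `L` is not an interval and
whose singletons are all straddled by non-penultimate big blocks, transferring all entries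
except the largest (`k`) of the last block `F` of the first component into the penultimate
block `P` yields an indecomposable partition. Here `k` is the minimal split point, so the
first component covers `{1,…,k}` and `F` is its block containing `k`. -/
theorem tweaking_yields_indecomposable (n : ℕ) (π : Finpartition (Finset.Icc 1 (n + 1)))
    (hdec : ¬ Indecomposable (n + 1) π)
    (k : ℕ) (hk1 : 1 ≤ k) (hkn : k ≤ n)
    (hsplit : ∀ B ∈ π.parts, B ⊆ Finset.Icc 1 k ∨ B ⊆ Finset.Icc (k + 1) (n + 1))
    (hkmin : ∀ k', 1 ≤ k' →
      (∀ B ∈ π.parts, B ⊆ Finset.Icc 1 k' ∨ B ⊆ Finset.Icc (k' + 1) (n + 1)) → k ≤ k')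
    (F : Finset ℕ) (hF : F ∈ π.parts) (hkF : k ∈ F)
    (L P : Finset ℕ) (hL : L ∈ π.parts) (hnL : n + 1 ∈ L)
    (hP : P ∈ π.parts) (hPL : P ≠ L)
    (hpen : ∀ B ∈ π.parts, B ≠ L → B ≠ P → ∃ q ∈ P, ∀ b ∈ B, b < q)
    (hlastblock : ¬ ∃ m M, L = Finset.Icc m M)
    (hstrad : ∀ B ∈ π.parts, B.card = 1 → ∀ a ∈ B,
      ∃ C ∈ π.parts, C ≠ P ∧ 2 ≤ C.card ∧ (∃ x ∈ C, x < a) ∧ ∃ y ∈ C, a < y) :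
    ∀ π' : Finpartition (Finset.Icc 1 (n + 1)),
      π'.parts = (π.parts \ {F, P}) ∪ {{k}, P ∪ F.erase k} →
      Indecomposable (n + 1) π' :=
  tweaking_yields_indecomposable_general n π k hkn hsplit hkmin F hF hkF L P hL hnL hPL hpen
    hlastblock hstrad
end
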